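/- Let M > 1 be a real number, n ≥ 1 a natural number, and v ≥ 0 a real number with (n−1)·M·v ≤ (M−1)·n. Then there exists a unique real number α* in the half-open interval [1/M, 1) such that (M−1)·M·n·(α*)³ − (M+1)·(M−2)·n·(α*)² − (4n + (M−1)(n−1)v)·α* + 2n = 0. -/

import Mathlib

/-!
Writing `c = (M - 1)(n - 1)v ≥ 0`, the cubic splits as `h α = n (α - 1) g α - c α` with
`g α = M (M - 1) α² + 2α - 2`. The constraint on `v` gives `h (1/M) ≥ 0`, while
`h 1 = -c ≤ 0`, so the intermediate value theorem gives a root in `[1/M, 1)`; when `c = 0`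
the root `1` is excluded and one uses a root of `g` instead. For uniqueness, the combination
`y (1 - y) h x - x (1 - x) h y` of the values at two points of `(0, 1)` factors through
`x - y` with a cofactor that is negative as soon as `h 1 ≤ 0`.
-/

/-- The cubic `h(α)` from the two-step stochastic stepsize schedule analysis. -/
noncomputable def hcub (M n v α : ℝ) : ℝ :=
  (M - 1) * M * n * α ^ 3 - (M + 1) * (M - 2) * n * α ^ 2
    - (4 * n + (M - 1) * (n - 1) * v) * α + 2 * n

open Set

lemma hcub_eq_sub_one_mul (M n v α : ℝ) :
    hcub M n v α =
      n * (α - 1) * (M * (M - 1) * α ^ 2 + 2 * α - 2) - (M - 1) * (n - 1) * v * α := by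
  unfold hcub; ring

lemma hcub_one (M n v : ℝ) : hcub M n v 1 = -((M - 1) * (n - 1) * v) := by
  unfold hcub; ring

lemma hcub_one_nonpos {M n v : ℝ} (hM : 1 ≤ M) (hn : 1 ≤ n) (hv : 0 ≤ v) :
    hcub M n v 1 ≤ 0 := by
  rw [hcub_one, neg_nonpos]
  exact mul_nonneg (mul_nonneg (by linarith) (by linarith)) hv

lemma hcub_one_div_mul_sq {M : ℝ} (hM : M ≠ 0) (n v : ℝ) :
    hcub M n v (1 / M) * M ^ 2 = (M - 1) * ((M - 1) * n - (n - 1) * M * v) := by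
  unfold hcub; field_simp; ring

lemma hcub_one_div_nonneg {M n v : ℝ} (hM : 1 ≤ M) (hbound : (n - 1) * M * v ≤ (M - 1) * n) :
    0 ≤ hcub M n v (1 / M) := by
  have hM0 : 0 < M := by linarith
  have hprod : 0 ≤ hcub M n v (1 / M) * M ^ 2 := by
    rw [hcub_one_div_mul_sq hM0.ne']
    exact mul_nonneg (by linarith) (by linarith)
  exact nonneg_of_mul_nonneg_left hprod (by positivity)

lemma hcub_cross_combination_eq (M n v x y : ℝ) :
    y * (1 - y) * hcub M n v x - x * (1 - x) * hcub M n v y =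
      (x - y) * (x * y * hcub M n v 1
        - (1 - x) * (1 - y) * ((M - 1) * M * n * (x * y) + 2 * n)) := by
  unfold hcub; ring

lemma eq_of_hcub_eq_zero {M n v x y : ℝ} (hM : 1 ≤ M) (hn : 0 < n) (h1 : hcub M n v 1 ≤ 0)
    (hx : x ∈ Ioo 0 1) (hy : y ∈ Ioo 0 1) (hx0 : hcub M n v x = 0) (hy0 : hcub M n v y = 0) :
    x = y := by
  have hxy : 0 < x * y := mul_pos hx.1 hy.1
  have hcofactor : x * y * hcub M n v 1
      - (1 - x) * (1 - y) * ((M - 1) * M * n * (x * y) + 2 * n) < 0 := by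
    have hMn : 0 ≤ (M - 1) * M * n := by
      have : 0 ≤ M - 1 := by linarith
      positivity
    have hpos : 0 < (1 - x) * (1 - y) * ((M - 1) * M * n * (x * y) + 2 * n) :=
      mul_pos (mul_pos (by linarith [hx.2]) (by linarith [hy.2])) (by positivity)
    nlinarith [mul_nonpos_of_nonneg_of_nonpos hxy.le h1]
  have hzero := hcub_cross_combination_eq M n v x y
  rw [hx0, hy0, mul_zero, mul_zero, sub_zero, eq_comm, mul_eq_zero] at hzero
  exact sub_eq_zero.mp (hzero.resolve_right hcofactor.ne)

lemma exists_hcub_eq_zero_mem_Ico {M n v : ℝ} (hM : 1 < M) (hn : 1 ≤ n) (hv : 0 ≤ v)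
    (hbound : (n - 1) * M * v ≤ (M - 1) * n) :
    ∃ α ∈ Ico (1 / M) 1, hcub M n v α = 0 := by
  have hM0 : 0 < M := by linarith
  have hMinv : 1 / M < 1 := (div_lt_one hM0).mpr hM
  rcases (hcub_one_nonpos hM.le hn hv).lt_or_eq with h1 | h1
  · have hcont : ContinuousOn (hcub M n v) (Icc (1 / M) 1) := by
      unfold hcub; fun_prop
    exact intermediate_value_Ico' hMinv.le hcont ⟨h1, hcub_one_div_nonneg hM.le hbound⟩
  · have hc : (M - 1) * (n - 1) * v = 0 := by linarith [hcub_one M n v]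
    set g : ℝ → ℝ := fun α => M * (M - 1) * α ^ 2 + 2 * α - 2 with hg
    have hgM : g (1 / M) < 0 := by
      have : g (1 / M) * M = 1 - M := by simp only [hg]; field_simp; ring
      nlinarith
    have hg1 : 0 < g 1 := by simp only [hg]; nlinarith
    have hcont : ContinuousOn g (Icc (1 / M) 1) := by simp only [hg]; fun_prop
    obtain ⟨β, hβ, hgβ⟩ := intermediate_value_Ioo hMinv.le hcont ⟨hgM, hg1⟩
    refine ⟨β, Ioo_subset_Ico_self hβ, ?_⟩
    rw [hcub_eq_sub_one_mul, hc]
    simp only [hg] at hgβ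
    rw [hgβ]; ring

theorem stmt_0 (M : ℝ) (n : ℕ) (v : ℝ)
    (hM : 1 < M) (hn : 1 ≤ n) (hv : 0 ≤ v)
    (hbound : ((n : ℝ) - 1) * M * v ≤ (M - 1) * n) :
    ∃! α : ℝ, α ∈ Set.Ico (1 / M) 1 ∧ hcub M (n : ℝ) v α = 0 := by
  have hn1 : (1 : ℝ) ≤ n := by exact_mod_cast hn
  have hMinv : 0 < 1 / M := by positivity
  obtain ⟨α, hα, hα0⟩ := exists_hcub_eq_zero_mem_Ico hM hn1 hv hbound
  refine ⟨α, ⟨hα, hα0⟩, fun y ⟨hy, hy0⟩ => ?_⟩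
  exact eq_of_hcub_eq_zero hM.le (by linarith) (hcub_one_nonpos hM.le hn1 hv)
    ⟨hMinv.trans_le hy.1, hy.2⟩ ⟨hMinv.trans_le hα.1, hα.2⟩ hy0 hα0
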